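/- MEHC upper-bounds the span of optimal values of the extended MDP: Let M = (S, A, p, r) be a bounded MDP with rewards in [0, r_max]. For each (s,a) let B(s,a) ⊆ [0, r_max] be a nonempty compact set of plausible mean rewards and C(s,a) a nonempty compact set of plausible transition distributions on S, and suppose r̄(s,a) ∈ B(s,a) and p(·|s,a) ∈ C(s,a) for all s ∈ S, a ∈ A. Define the i-step optimal values of the extended MDP by u_0(s) := 0 and u_{i+1}(s) := max_{a∈A} [ max_{r'∈B(s,a)} r' + max_{p'∈C(s,a)} Σ_{s'} p'(s')·u_i(s') ]. Then for every i ≥ 0, max_s u_i(s) − min_{s'} u_i(s') ≤ κ(M). -/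

import Mathlib

open scoped ENNReal

noncomputable section

/-- The probability that a Markov chain with transition kernel `Q` started at `s`
traverses exactly the initial path segment `path`. -/
def pathProb {S : Type*} [DecidableEq S] (Q : S → S → ℝ≥0∞) (s : S) {t : ℕ}
    (path : Fin (t + 1) → S) : ℝ≥0∞ :=
  (if path 0 = s then 1 else 0) * ∏ i : Fin t, Q (path i.castSucc) (path i.succ)

/-- The expected hitting time `E[h_{s→s'}]` of `s'` from `s` for the kernel `Q`,
via `E[h] = ∑_t P[h > t]`, where `h > t` iff the path avoids `s'` up to time `t`. -/
def hitTimeE {S : Type*} [Fintype S] [DecidableEq S] (Q : S → S → ℝ≥0∞) (s s' : S) :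
    ℝ≥0∞ :=
  ∑' t : ℕ, ∑ path : Fin (t + 1) → S,
    if ∀ i, path i ≠ s' then pathProb Q s path else 0

/-- The expected hitting cost `E[∑_{t=0}^{h_{s→s'}-1} c(s_t)]` of `s'` from `s`
for the kernel `Q` and per-state cost `c`. -/
def hitCostE {S : Type*} [Fintype S] [DecidableEq S] (Q : S → S → ℝ≥0∞) (c : S → ℝ≥0∞)
    (s s' : S) : ℝ≥0∞ :=
  ∑' t : ℕ, ∑ path : Fin (t + 1) → S,
    if ∀ i, path i ≠ s' then pathProb Q s path * c (path (Fin.last t)) else 0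

/-- The state-transition kernel induced by following policy `π` in an MDP with
transition function `p`. -/
def polKernel {S A : Type*} (p : S → A → S → ℝ≥0∞) (π : S → A) : S → S → ℝ≥0∞ :=
  fun s s' => p s (π s) s'

/-- The diameter `D(M) = max_{s,s'} min_π E[h_{s→s'}(M,π)]` of an MDP. -/
def diam {S A : Type*} [Fintype S] [DecidableEq S] (p : S → A → S → ℝ≥0∞) : ℝ≥0∞ :=
  ⨆ s, ⨆ s', ⨅ π : S → A, hitTimeE (polKernel p π) s s'

/-- The maximum expected hitting cost
`κ(M) = max_{s,s'} min_π E[∑_{t=0}^{h_{s→s'}(M,π)-1} (r_max - r_t)]` of an MDP with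
mean rewards `rbar`. -/
def mehc {S A : Type*} [Fintype S] [DecidableEq S] (p : S → A → S → ℝ≥0∞) (rmax : ℝ)
    (rbar : S → A → ℝ) : ℝ≥0∞ :=
  ⨆ s, ⨆ s', ⨅ π : S → A,
    hitCostE (polKernel p π) (fun x => ENNReal.ofReal (rmax - rbar x (π x))) s s'

/-- The `i`-step optimal values of the extended MDP determined by the plausible mean
rewards `B s a ⊆ ℝ` and plausible transition vectors `C s a ⊆ (S → ℝ)`:
`u 0 = 0`, `u (i+1) s = max_a (sup B(s,a) + sup_{p' ∈ C(s,a)} ∑_{s'} p'(s') · u i s')`. -/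
def uIter {S A : Type*} [Fintype S] (B : S → A → Set ℝ) (C : S → A → Set (S → ℝ)) :
    ℕ → S → ℝ
  | 0, _ => 0
  | i + 1, s =>
      ⨆ a : A, (sSup (B s a)
        + sSup ((fun q : S → ℝ => ∑ s', q s' * uIter B C i s') '' C s a))


/-! Fix a policy `π` and a target state `t`, and let `H s` be the expected cost of hitting `t`
from `s` when every step costs `rmax - r̄(s, π s)`. Then `H t = 0` and, for `s ≠ t`,
`H s = (rmax - r̄(s, π s)) + ∑ₓ p(x | s, π s) H x`. Since the true MDP is plausible, the
extended Bellman step satisfies `u (j+1) s ≥ r̄(s, π s) + ∑ₓ p(x | s, π s) u j x`, and since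
plausible rewards are at most `rmax` and plausible transitions are distributions, it raises no
value by more than `rmax`. These two facts make `u j t - u j s ≤ H s` an invariant of value
iteration. Taking `t` a maximiser and `s` a minimiser of `u i`, and then the best policy, bounds
the span by `κ`. -/

section HittingCost

variable {S : Type*} [Fintype S] [DecidableEq S] (Q : S → S → ℝ≥0∞) (c : S → ℝ≥0∞)

def hitCostAt (s' : S) (t : ℕ) (s : S) : ℝ≥0∞ :=
  ∑ path : Fin (t + 1) → S,
    if ∀ i, path i ≠ s' then pathProb Q s path * c (path (Fin.last t)) else 0

lemma pathProb_cons {t : ℕ} (s x : S) (q : Fin (t + 1) → S) :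
    pathProb Q s (Fin.cons x q : Fin (t + 2) → S) =
      if x = s then ∑ y, Q s y * pathProb Q y q else 0 := by
  split_ifs with hx
  · subst hx
    simp [pathProb, Fin.prod_univ_succ]
  · simp [pathProb, hx]

lemma hitCostAt_zero {s s' : S} (h : s ≠ s') : hitCostAt Q c s' 0 s = c s := by
  rw [hitCostAt, ← (Equiv.funUnique (Fin 1) S).symm.sum_comp, Finset.sum_eq_single s]
  · simp [pathProb, h]
  · intro x _ hx
    simp [pathProb, hx]
  · simp

lemma hitCostAt_succ {s s' : S} (h : s ≠ s') (t : ℕ) :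
    hitCostAt Q c s' (t + 1) s = ∑ x, Q s x * hitCostAt Q c s' t x := by
  have avoid_cons (x : S) (q : Fin (t + 1) → S) :
      (∀ i, (Fin.cons x q : Fin (t + 2) → S) i ≠ s') ↔ x ≠ s' ∧ ∀ i, q i ≠ s' := by
    rw [Fin.forall_fin_succ]
    simp only [Fin.cons_zero, Fin.cons_succ]
  rw [hitCostAt, ← (Fin.consEquiv _).sum_comp, Fintype.sum_prod_type, Finset.sum_eq_single s]
  · simp only [hitCostAt, Finset.mul_sum]
    rw [Finset.sum_comm]
    refine Finset.sum_congr rfl fun q _ => ?_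
    simp only [Fin.consEquiv, Equiv.coe_fn_mk, avoid_cons, pathProb_cons, Fin.cons_last]
    split_ifs <;> simp_all [Finset.sum_mul, mul_assoc]
  · intro x _ hx
    simp [Fin.consEquiv, pathProb_cons, hx]
  · simp

lemma hitCostE_self (s : S) : hitCostE Q c s s = 0 := by
  refine ENNReal.tsum_eq_zero.mpr fun t => Finset.sum_eq_zero fun path _ => ?_
  split_ifs with h
  · simp [pathProb, h 0]
  · rfl

lemma hitCostE_of_ne {s s' : S} (h : s ≠ s') :
    hitCostE Q c s s' = c s + ∑ x, Q s x * hitCostE Q c x s' := by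
  change ∑' t, hitCostAt Q c s' t s = _
  rw [tsum_eq_zero_add' ENNReal.summable, hitCostAt_zero Q c h]
  simp only [hitCostAt_succ Q c h]
  rw [Summable.tsum_finsetSum fun _ _ => ENNReal.summable]
  simp only [ENNReal.tsum_mul_left]
  rfl

end HittingCost

section ExtendedBellman

variable {S A : Type*} [Fintype S] [Fintype A]
  (B : S → A → Set ℝ) (C : S → A → Set (S → ℝ))

def extQValue (v : S → ℝ) (s : S) (a : A) : ℝ :=
  sSup (B s a) + sSup ((fun q : S → ℝ => ∑ s', q s' * v s') '' C s a)

def extBellman (v : S → ℝ) (s : S) : ℝ :=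
  ⨆ a : A, extQValue B C v s a

omit [Fintype A] in
lemma uIter_succ (i : ℕ) : uIter B C (i + 1) = extBellman B C (uIter B C i) := rfl

lemma extQValue_le_extBellman (v : S → ℝ) (s : S) (a : A) :
    extQValue B C v s a ≤ extBellman B C v s :=
  le_ciSup (Set.finite_range _).bddAbove a

lemma le_extBellman {v : S → ℝ} {s : S} {a : A} {b : ℝ} {q : S → ℝ}
    (hB : BddAbove (B s a)) (hC : IsCompact (C s a)) (hb : b ∈ B s a) (hq : q ∈ C s a) :
    b + ∑ x, q x * v x ≤ extBellman B C v s :=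
  le_trans (add_le_add (le_csSup hB hb)
      (le_csSup (hC.image (by fun_prop)).bddAbove ⟨q, hq, rfl⟩))
    (extQValue_le_extBellman B C v s a)

omit [Fintype A] in
lemma extBellman_zero_le [Nonempty A] {rmax : ℝ} (hBne : ∀ s a, (B s a).Nonempty)
    (hBle : ∀ s a, ∀ b ∈ B s a, b ≤ rmax) (s : S) : extBellman B C 0 s ≤ rmax := by
  refine ciSup_le fun a => ?_
  have hb : sSup (B s a) ≤ rmax := csSup_le (hBne s a) (hBle s a)
  have hq : sSup ((fun q : S → ℝ => ∑ s', q s' * (0 : S → ℝ) s') '' C s a) ≤ 0 :=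
    Real.sSup_nonpos (by rintro _ ⟨q, _, rfl⟩; simp)
  exact (add_le_add hb hq).trans_eq (add_zero rmax)

lemma extBellman_le_add [Nonempty A] (hCne : ∀ s a, (C s a).Nonempty)
    (hCcp : ∀ s a, IsCompact (C s a))
    (hCdist : ∀ s a, ∀ q ∈ C s a, (∀ s', 0 ≤ q s') ∧ ∑ s', q s' = 1)
    {v w : S → ℝ} {k : ℝ} (hvw : ∀ x, v x ≤ w x + k) (s : S) :
    extBellman B C v s ≤ extBellman B C w s + k := by
  refine ciSup_le fun a => ?_
  have hexp : sSup ((fun q : S → ℝ => ∑ s', q s' * v s') '' C s a)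
      ≤ sSup ((fun q : S → ℝ => ∑ s', q s' * w s') '' C s a) + k := by
    refine csSup_le ((hCne s a).image _) ?_
    rintro _ ⟨q, hq, rfl⟩
    obtain ⟨hq0, hq1⟩ := hCdist s a q hq
    calc ∑ x, q x * v x ≤ ∑ x, q x * (w x + k) :=
          Finset.sum_le_sum fun x _ => mul_le_mul_of_nonneg_left (hvw x) (hq0 x)
      _ = ∑ x, q x * w x + k := by
          simp only [mul_add, Finset.sum_add_distrib, ← Finset.sum_mul, hq1, one_mul]
      _ ≤ _ := by
          gcongr
          exact le_csSup ((hCcp s a).image (by fun_prop)).bddAbove ⟨q, hq, rfl⟩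
  have := extQValue_le_extBellman B C w s a
  unfold extQValue at this ⊢
  linarith

lemma uIter_succ_le [Nonempty A] {rmax : ℝ} (hBne : ∀ s a, (B s a).Nonempty)
    (hBle : ∀ s a, ∀ b ∈ B s a, b ≤ rmax) (hCne : ∀ s a, (C s a).Nonempty)
    (hCcp : ∀ s a, IsCompact (C s a))
    (hCdist : ∀ s a, ∀ q ∈ C s a, (∀ s', 0 ≤ q s') ∧ ∑ s', q s' = 1) :
    ∀ i s, uIter B C (i + 1) s ≤ uIter B C i s + rmax
  | 0, s => by
      rw [uIter_succ]
      exact (extBellman_zero_le B C hBne hBle s).trans_eq (zero_add rmax).symm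
  | i + 1, s => by
      rw [uIter_succ, uIter_succ B C i]
      exact extBellman_le_add B C hCne hCcp hCdist
        (uIter_succ_le hBne hBle hCne hCcp hCdist i) s

end ExtendedBellman

theorem ofReal_sub_le_hitCostE {S : Type*} [Fintype S] [DecidableEq S] {Q : S → S → ℝ≥0∞}
    (hQ : ∀ s, ∑ x, Q s x = 1) {ρ : S → ℝ} {rmax : ℝ} {u : ℕ → S → ℝ} {t : S}
    (h0 : ∀ s, u 0 t ≤ u 0 s)
    (hopt : ∀ j s, ρ s + ∑ x, (Q s x).toReal * u j x ≤ u (j + 1) s)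
    (hgrowth : ∀ j, u (j + 1) t ≤ u j t + rmax) (j : ℕ) (s : S) :
    ENNReal.ofReal (u j t - u j s) ≤ hitCostE Q (fun x => ENNReal.ofReal (rmax - ρ x)) s t := by
  induction j generalizing s with
  | zero => simp [ENNReal.ofReal_of_nonpos (sub_nonpos.2 (h0 s))]
  | succ j ih =>
    obtain rfl | hs := eq_or_ne s t
    · simp
    have hQfin (x : S) : Q s x ≠ ⊤ :=
      ENNReal.sum_ne_top.1 (by simp [hQ s]) x (Finset.mem_univ x)
    have hQsum : ∑ x, (Q s x).toReal = 1 := by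
      rw [← ENNReal.toReal_sum fun x _ => hQfin x, hQ s, ENNReal.toReal_one]
    have hstep : u (j + 1) t - u (j + 1) s
        ≤ (rmax - ρ s) + ∑ x, (Q s x).toReal * (u j t - u j x) := by
      simp only [mul_sub, Finset.sum_sub_distrib, ← Finset.sum_mul, hQsum, one_mul]
      linarith [hopt j s, hgrowth j]
    rw [hitCostE_of_ne Q _ hs]
    calc ENNReal.ofReal (u (j + 1) t - u (j + 1) s)
        ≤ ENNReal.ofReal (rmax - ρ s)
          + ∑ x, ENNReal.ofReal ((Q s x).toReal * (u j t - u j x)) :=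
          (ENNReal.ofReal_le_ofReal hstep).trans <| ENNReal.ofReal_add_le.trans <| by
            gcongr
            exact Finset.le_sum_of_subadditive _ ENNReal.ofReal_zero.le
              (fun _ _ => ENNReal.ofReal_add_le) _ _
      _ = ENNReal.ofReal (rmax - ρ s) + ∑ x, Q s x * ENNReal.ofReal (u j t - u j x) := by
          simp [ENNReal.ofReal_mul, ENNReal.ofReal_toReal (hQfin _)]
      _ ≤ _ := by gcongr with x; exact ih x

theorem stmt10_general {S A : Type*} [Fintype S] [DecidableEq S] [Nonempty S] [Fintype A]
    [Nonempty A]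
    (p : S → A → S → ℝ≥0∞) (hp : ∀ s a, ∑ s', p s a s' = 1)
    (rmax : ℝ)
    (rbar : S → A → ℝ)
    (B : S → A → Set ℝ)
    (hBne : ∀ s a, (B s a).Nonempty) (hBcp : ∀ s a, IsCompact (B s a))
    (hBsub : ∀ s a, B s a ⊆ Set.Icc 0 rmax)
    (C : S → A → Set (S → ℝ))
    (hCne : ∀ s a, (C s a).Nonempty) (hCcp : ∀ s a, IsCompact (C s a))
    (hCdist : ∀ s a, ∀ q ∈ C s a, (∀ s', 0 ≤ q s') ∧ ∑ s', q s' = 1)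
    -- the actual MDP is statistically plausible
    (hrB : ∀ s a, rbar s a ∈ B s a)
    (hpC : ∀ s a, (fun s' => (p s a s').toReal) ∈ C s a) :
    ∀ i : ℕ,
      ENNReal.ofReal ((⨆ s, uIter B C i s) - ⨅ s', uIter B C i s')
        ≤ mehc p rmax rbar := by
  intro i
  obtain ⟨smax, hmax⟩ := Finite.exists_max (uIter B C i)
  obtain ⟨smin, hmin⟩ := Finite.exists_min (uIter B C i)
  have hspan : (⨆ s, uIter B C i s) - ⨅ s', uIter B C i s'
      ≤ uIter B C i smax - uIter B C i smin :=
    sub_le_sub (ciSup_le hmax) (le_ciInf hmin)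
  refine (ENNReal.ofReal_le_ofReal hspan).trans <|
    le_iSup_of_le smin <| le_iSup_of_le smax <| le_iInf fun π => ?_
  exact ofReal_sub_le_hitCostE (Q := polKernel p π) (fun s => hp s (π s)) (fun _ => le_rfl)
    (fun j s => by
      rw [uIter_succ]
      exact le_extBellman B C (hBcp s (π s)).bddAbove (hCcp s (π s)) (hrB s (π s))
        (hpC s (π s)))
    (fun j => uIter_succ_le B C hBne (fun s a b hb => (hBsub s a hb).2) hCne hCcp hCdist j smax)
    i smin

/-- if the actual MDP is contained in the extended MDP, then the span of
the `i`-step optimal values of the extended MDP is bounded by `κ(M)`. -/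
theorem stmt10 {S A : Type*} [Fintype S] [DecidableEq S] [Nonempty S] [Fintype A]
    [Nonempty A]
    (p : S → A → S → ℝ≥0∞) (hp : ∀ s a, ∑ s', p s a s' = 1)
    (rmax : ℝ) (hrmax : 0 ≤ rmax)
    (rbar : S → A → ℝ) (hr : ∀ s a, rbar s a ∈ Set.Icc 0 rmax)
    (B : S → A → Set ℝ)
    (hBne : ∀ s a, (B s a).Nonempty) (hBcp : ∀ s a, IsCompact (B s a))
    (hBsub : ∀ s a, B s a ⊆ Set.Icc 0 rmax)
    (C : S → A → Set (S → ℝ))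
    (hCne : ∀ s a, (C s a).Nonempty) (hCcp : ∀ s a, IsCompact (C s a))
    (hCdist : ∀ s a, ∀ q ∈ C s a, (∀ s', 0 ≤ q s') ∧ ∑ s', q s' = 1)
    -- the actual MDP is statistically plausible
    (hrB : ∀ s a, rbar s a ∈ B s a)
    (hpC : ∀ s a, (fun s' => (p s a s').toReal) ∈ C s a) :
    ∀ i : ℕ,
      ENNReal.ofReal ((⨆ s, uIter B C i s) - ⨅ s', uIter B C i s')
        ≤ mehc p rmax rbar :=
  stmt10_general p hp rmax rbar B hBne hBcp hBsub C hCne hCcp hCdist hrB hpC
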